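/- arXiv:1812.07321 — 2 statements merged into one kernel-verified Lean document; each statement's English description precedes it below -/
import Mathlib

section
/- Let H be a Q-graded Hopf quasigroup and M, N two Q-graded H-quasimodules. Then M⊗N = {M_q⊗N_q}_{q∈Q} with the diagonal action h·(m⊗n) = h_{(1)}·m ⊗ h_{(2)}·n is again a Q-graded H-quasimodule. -/
open TensorProduct

universe u v w

/-- A quasigroup: a set with product, identity `e`, and two-sided inverses satisfying
`p⁻¹(pq) = q` and `(qp)p⁻¹ = q`. -/
structure QuasigroupStruct (Q : Type u) where
  mul : Q → Q → Q
  one : Q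
  inv : Q → Q
  mul_one : ∀ p, mul p one = p
  one_mul : ∀ p, mul one p = p
  inv_mul_cancel : ∀ p q, mul (inv p) (mul p q) = q
  mul_inv_cancel : ∀ p q, mul (mul q p) (inv p) = q

namespace QuasigroupStruct

variable {Q : Type u} (G : QuasigroupStruct Q)

lemma inv_mul_self (p : Q) : G.mul (G.inv p) p = G.one := by
  have h := G.inv_mul_cancel p G.one
  rwa [G.mul_one] at h

lemma mul_inv_self (p : Q) : G.mul p (G.inv p) = G.one := by
  have h := G.mul_inv_cancel p G.one
  rwa [G.one_mul] at h

lemma inv_inv (p : Q) : G.inv (G.inv p) = p := by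
  have h := G.inv_mul_cancel (G.inv p) p
  rw [G.inv_mul_self p] at h
  rwa [G.mul_one] at h

lemma mul_inv_cancel_left (p q : Q) : G.mul p (G.mul (G.inv p) q) = q := by
  have h := G.inv_mul_cancel (G.inv p) q
  rwa [G.inv_inv] at h

lemma inv_mul_cancel_right (p q : Q) : G.mul (G.mul q (G.inv p)) p = q := by
  have h := G.mul_inv_cancel (G.inv p) q
  rwa [G.inv_inv] at h

lemma mul_inv_rev (p q : Q) : G.inv (G.mul p q) = G.mul (G.inv q) (G.inv p) := by
  have h1 : G.mul q (G.inv (G.mul p q)) = G.inv p := by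
    have h := G.mul_inv_cancel (G.mul p q) (G.inv p)
    rwa [G.inv_mul_cancel p q] at h
  calc G.inv (G.mul p q)
      = G.mul (G.inv q) (G.mul q (G.inv (G.mul p q))) := (G.inv_mul_cancel q _).symm
    _ = G.mul (G.inv q) (G.inv p) := by rw [h1]

lemma inv_one : G.inv G.one = G.one := by
  have h := G.inv_mul_cancel G.one G.one
  rwa [G.one_mul, G.mul_one] at h

end QuasigroupStruct

/-- Transport along an equality of grades, as a linear map. -/
def gcl {Q : Type u} {H : Q → Type w} {k : Type v} [CommSemiring k]
    [∀ p, AddCommMonoid (H p)] [∀ p, Module k (H p)] {p q : Q} (e : p = q) :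
    H p →ₗ[k] H q := by subst e; exact LinearMap.id

/-- A `Q`-graded Hopf quasigroup: a family of coassociative counital coalgebras `H p`
with a (not necessarily associative) graded multiplication, unit and antipode family,
such that the multiplications and the unit are coalgebra maps and the antipode
satisfies the Hopf quasigroup axioms. -/
structure GradedHopfQuasigroup (k : Type v) [CommRing k] {Q : Type u} (G : QuasigroupStruct Q)
    (H : Q → Type w) [∀ p, AddCommGroup (H p)] [∀ p, Module k (H p)]
    [∀ p, Coalgebra k (H p)] where
  mul : ∀ p q, H p →ₗ[k] H q →ₗ[k] H (G.mul p q)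
  one : H G.one
  antipode : ∀ p, H p →ₗ[k] H (G.inv p)
  mul_one' : ∀ (p : Q) (h : H p), gcl (k := k) (G.mul_one p) ((mul p G.one h) one) = h
  one_mul' : ∀ (p : Q) (h : H p), gcl (k := k) (G.one_mul p) ((mul G.one p one) h) = h
  comul_mul : ∀ (p q : Q) (h : H p) (g : H q),
    Coalgebra.comul (R := k) ((mul p q h) g) =
      (TensorProduct.map (TensorProduct.lift (mul p q)) (TensorProduct.lift (mul p q)))
        ((TensorProduct.tensorTensorTensorComm k (H p) (H p) (H q) (H q))
          (Coalgebra.comul h ⊗ₜ[k] Coalgebra.comul g))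
  counit_mul : ∀ (p q : Q) (h : H p) (g : H q),
    Coalgebra.counit (R := k) ((mul p q h) g) =
      Coalgebra.counit (R := k) h * Coalgebra.counit (R := k) g
  comul_one : Coalgebra.comul (R := k) one = one ⊗ₜ[k] one
  counit_one : Coalgebra.counit (R := k) one = 1
  /-- `S (h₁) (h₂ g) = ε(h) g` -/
  antipode_mul_left : ∀ (p q : Q) (h : H p) (g : H q),
    TensorProduct.lift
      (((mul (G.inv p) (G.mul p q)).comp (antipode p)).compl₂ ((mul p q).flip g))
      (Coalgebra.comul h)
      = gcl (k := k) (G.inv_mul_cancel p q).symm (Coalgebra.counit (R := k) h • g)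
  /-- `h₁ (S (h₂) g) = ε(h) g` -/
  antipode_mul_left' : ∀ (p q : Q) (h : H p) (g : H q),
    TensorProduct.lift
      ((mul p (G.mul (G.inv p) q)).compl₂ (((mul (G.inv p) q).flip g).comp (antipode p)))
      (Coalgebra.comul h)
      = gcl (k := k) (G.mul_inv_cancel_left p q).symm (Coalgebra.counit (R := k) h • g)
  /-- `(g S (h₁)) h₂ = ε(h) g` -/
  antipode_mul_right : ∀ (p q : Q) (h : H p) (g : H q),
    TensorProduct.lift
      ((mul (G.mul q (G.inv p)) p).comp ((mul q (G.inv p) g).comp (antipode p)))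
      (Coalgebra.comul h)
      = gcl (k := k) (G.inv_mul_cancel_right p q).symm (Coalgebra.counit (R := k) h • g)
  /-- `(g h₁) S (h₂) = ε(h) g` -/
  antipode_mul_right' : ∀ (p q : Q) (h : H p) (g : H q),
    TensorProduct.lift
      (((mul (G.mul q p) (G.inv p)).comp (mul q p g)).compl₂ (antipode p))
      (Coalgebra.comul h)
      = gcl (k := k) (G.mul_inv_cancel p q).symm (Coalgebra.counit (R := k) h • g)

variable {k : Type v} [Field k] {Q : Type u} {G : QuasigroupStruct Q}
  {H : Q → Type w} [∀ p, AddCommGroup (H p)] [∀ p, Module k (H p)]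
  [∀ p, Coalgebra k (H p)]

/-- A `Q`-graded `H`-quasimodule. -/
structure GradedQuasimodule (A : GradedHopfQuasigroup k G H) (M : Q → Type w)
    [∀ q, AddCommGroup (M q)] [∀ q, Module k (M q)] where
  act : ∀ p q, H p →ₗ[k] M q →ₗ[k] M (G.mul p q)
  one_act : ∀ (q : Q) (m : M q), gcl (k := k) (G.one_mul q) ((act G.one q A.one) m) = m
  /-- `h₁ · (S_p(h₂) · m) = ε_p(h) m` -/
  quasi_left : ∀ (p q : Q) (h : H p) (m : M q),
    TensorProduct.lift ((act p (G.mul (G.inv p) q)).compl₂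
        (((act (G.inv p) q).flip m).comp (A.antipode p))) (Coalgebra.comul h)
      = gcl (k := k) (G.mul_inv_cancel_left p q).symm (Coalgebra.counit (R := k) h • m)
  /-- `S_p(h₁) · (h₂ · m) = ε_p(h) m` -/
  quasi_left' : ∀ (p q : Q) (h : H p) (m : M q),
    TensorProduct.lift (((act (G.inv p) (G.mul p q)).comp (A.antipode p)).compl₂
        ((act p q).flip m)) (Coalgebra.comul h)
      = gcl (k := k) (G.inv_mul_cancel p q).symm (Coalgebra.counit (R := k) h • m)

/-
Writing `Δh = h₁ ⊗ h₂`, `H ⊗ H` acts factorwise on `M ⊗ N`, and the diagonal action of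
`h` is the action of `Δh`. Once the antipode is known to be anticomultiplicative,
`Δ(S h) = S h₂ ⊗ S h₁`, the quasimodule laws of `M ⊗ N` become
`S h₂ (h₃ m) ⊗ S h₁ (h₄ n) = ε(h) m ⊗ n` and its mirror image: the inner pair `h₂, h₃` collapses
by the law of `M`, then the outer pair by the law of `N`.

Anticomultiplicativity comes from the same identity for the regular quasimodule `H`, applied to
`τ(S ⊗ S)Δh₁ · (Δh₂ · Δ(S h₃))`. Collapsing `h₁, h₂` leaves `Δ(S h)`; collapsing instead `h₂, h₃`
through `Δh₂ · Δ(S h₃) = Δ(h₂ S h₃)` and `h₂ S h₃ = ε 1` leaves `S h₂ ⊗ S h₁`.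
-/

open Coalgebra

section Coassoc

variable {R C : Type*} [CommSemiring R] [AddCommMonoid C] [Module R C] [Coalgebra R C]
  {ι : Type*} {κ : ι → Type*} {Λ : ∀ i, κ i → Type*} {a : C}

theorem Coalgebra.sum_counit_right_smul (ρ : Repr R a ι) :
    ∑ i ∈ ρ.index, counit (R := R) (ρ.right i) • ρ.left i = a := by
  simpa only [map_sum, lift.tmul, LinearMap.flip_apply, LinearMap.lsmul_apply, one_smul]
    using congr(TensorProduct.lift (LinearMap.lsmul R C).flip $(sum_tmul_counit_eq ρ))

theorem Coalgebra.map_comul_comul_comul_eq_sum (ρ : Repr R a ι)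
    (β : ∀ i, Repr R (ρ.right i) (κ i)) (γ : ∀ i l, Repr R ((β i).left l) (Λ i l)) :
    map comul comul (comul a) =
      ∑ i ∈ ρ.index, ∑ l ∈ (β i).index, ∑ r ∈ (γ i l).index,
        (ρ.left i ⊗ₜ[R] (γ i l).left r) ⊗ₜ[R] ((γ i l).right r ⊗ₜ[R] (β i).right l) := by
  have coassoc₄ : map (comul (R := R) (A := C)) comul ∘ₗ comul =
      ((_root_.TensorProduct.assoc R C C (C ⊗[R] C)).symm.toLinearMap ∘ₗ
        (_root_.TensorProduct.assoc R C C C).toLinearMap.lTensor C) ∘ₗ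
        (comul.rTensor C).lTensor C ∘ₗ comul.lTensor C ∘ₗ comul := by
    simp only [coassoc_simps]
  rw [← LinearMap.comp_apply (map comul comul), coassoc₄]
  simp only [LinearMap.comp_apply, ← ρ.eq, map_sum, LinearMap.lTensor_tmul, ← (β _).eq,
    ← (γ _ _).eq, LinearMap.rTensor_tmul, tmul_sum, sum_tmul, LinearEquiv.coe_coe, assoc_tmul,
    assoc_symm_tmul]

theorem Coalgebra.lift_comul_eq_sum {B : Type*} [AddCommMonoid B] [Module R B]
    (f : C →ₗ[R] C →ₗ[R] B) (ρ : Repr R a ι) :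
    TensorProduct.lift f (comul a) = ∑ i ∈ ρ.index, f (ρ.left i) (ρ.right i) := by
  simp [← ρ.eq]

end Coassoc

section Transport

variable {Q : Type u} {k : Type v} [CommSemiring k] {F : Q → Type w}
  [∀ p, AddCommMonoid (F p)] [∀ p, Module k (F p)]

lemma gcl_gcl {p q r : Q} (e₁ : p = q) (e₂ : q = r) (x : F p) :
    gcl (k := k) e₂ (gcl (k := k) e₁ x) = gcl (k := k) (e₁.trans e₂) x := by
  subst e₁ e₂; rfl

lemma gcl_injective {p q : Q} (e : p = q) : Function.Injective (gcl (k := k) (H := F) e) := by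
  subst e; exact fun _ _ h => h

lemma gcl_apply_right {K L : Q → Type*} [∀ p, AddCommMonoid (K p)] [∀ p, Module k (K p)]
    [∀ p, AddCommMonoid (L p)] [∀ p, Module k (L p)] (mul : Q → Q → Q)
    (f : ∀ p q, F p →ₗ[k] K q →ₗ[k] L (mul p q)) {p q q' : Q} (e : q = q') (x : F p) (y : K q) :
    f p q' x (gcl (k := k) e y) = gcl (k := k) (congrArg (mul p) e) (f p q x y) := by
  subst e; rfl

lemma comul_gcl [∀ p, Coalgebra k (F p)] {p q : Q} (e : p = q) (x : F p) :
    comul (R := k) (gcl (k := k) e x) = map (gcl (k := k) e) (gcl (k := k) e) (comul x) := by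
  subst e; rw [show gcl (k := k) (rfl : p = p) = LinearMap.id from rfl, map_id]; rfl

lemma gcl_tmul {M N : Q → Type w} [∀ p, AddCommMonoid (M p)] [∀ p, Module k (M p)]
    [∀ p, AddCommMonoid (N p)] [∀ p, Module k (N p)] {p q : Q} (e : p = q) (x : M p) (y : N p) :
    gcl (k := k) (H := fun r => M r ⊗[k] N r) e (x ⊗ₜ[k] y)
      = gcl (k := k) e x ⊗ₜ[k] gcl (k := k) e y := by
  subst e; rfl

end Transport

namespace GradedHopfQuasigroup

variable (A : GradedHopfQuasigroup k G H)

def regular : GradedQuasimodule A H where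
  act := A.mul
  one_act := A.one_mul'
  quasi_left := A.antipode_mul_left'
  quasi_left' := A.antipode_mul_left

def swapAntipode (p : Q) : H p ⊗[k] H p →ₗ[k] H (G.inv p) ⊗[k] H (G.inv p) :=
  (TensorProduct.comm k _ _).toLinearMap ∘ₗ map (A.antipode p) (A.antipode p)

@[simp]
lemma swapAntipode_tmul (p : Q) (a b : H p) :
    A.swapAntipode p (a ⊗ₜ b) = A.antipode p b ⊗ₜ A.antipode p a := rfl

lemma mul_one_eq_gcl (p : Q) (h : H p) :
    A.mul p G.one h A.one = gcl (k := k) (G.mul_one p).symm h := by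
  have h' := congrArg (gcl (k := k) (G.mul_one p).symm) (A.mul_one' p h)
  rwa [gcl_gcl] at h'

lemma sum_mul_antipode {ι : Type*} (p : Q) (h : H p) (ρ : Repr k h ι) :
    ∑ i ∈ ρ.index, A.mul p (G.inv p) (ρ.left i) (A.antipode p (ρ.right i))
      = counit (R := k) h • gcl (k := k) (G.mul_inv_self p).symm A.one := by
  have hS := A.antipode_mul_left' p G.one h A.one
  simp only [lift_comul_eq_sum _ ρ, LinearMap.compl₂_apply, LinearMap.comp_apply,
    LinearMap.flip_apply, mul_one_eq_gcl, gcl_apply_right (k := k) G.mul A.mul, ← map_sum] at hS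
  apply gcl_injective (k := k) (F := H) (congrArg (G.mul p) (G.mul_one (G.inv p))).symm
  rw [hS, map_smul, map_smul, gcl_gcl]

end GradedHopfQuasigroup

namespace GradedQuasimodule

variable {A : GradedHopfQuasigroup k G H} {M N : Q → Type w}
  [∀ q, AddCommGroup (M q)] [∀ q, Module k (M q)]
  [∀ q, AddCommGroup (N q)] [∀ q, Module k (N q)]

lemma sum_act_antipode_act (P : GradedQuasimodule A M) {ι : Type*} (p q : Q) (h : H p)
    (ρ : Repr k h ι) (m : M q) :
    ∑ i ∈ ρ.index, P.act p (G.mul (G.inv p) q) (ρ.left i)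
        (P.act (G.inv p) q (A.antipode p (ρ.right i)) m)
      = counit (R := k) h • gcl (k := k) (G.mul_inv_cancel_left p q).symm m := by
  simpa [lift_comul_eq_sum _ ρ] using P.quasi_left p q h m

lemma sum_antipode_act_act (P : GradedQuasimodule A M) {ι : Type*} (p q : Q) (h : H p)
    (ρ : Repr k h ι) (m : M q) :
    ∑ i ∈ ρ.index, P.act (G.inv p) (G.mul p q) (A.antipode p (ρ.left i))
        (P.act p q (ρ.right i) m)
      = counit (R := k) h • gcl (k := k) (G.inv_mul_cancel p q).symm m := by
  simpa [lift_comul_eq_sum _ ρ] using P.quasi_left' p q h m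

variable (PM : GradedQuasimodule A M) (PN : GradedQuasimodule A N)

def pairAct (p q : Q) :
    H p ⊗[k] H p →ₗ[k] M q ⊗[k] N q →ₗ[k] M (G.mul p q) ⊗[k] N (G.mul p q) :=
  homTensorHomMap (RingHom.id k) (M q) (N q) (M (G.mul p q)) (N (G.mul p q)) ∘ₗ
    map (PM.act p q) (PN.act p q)

@[simp]
lemma pairAct_tmul_tmul (p q : Q) (a b : H p) (m : M q) (n : N q) :
    pairAct PM PN p q (a ⊗ₜ b) (m ⊗ₜ n) = PM.act p q a m ⊗ₜ PN.act p q b n := by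
  simp [pairAct]

lemma pairAct_apply_tmul (p q : Q) (x : H p ⊗[k] H p) (m : M q) (n : N q) :
    pairAct PM PN p q x (m ⊗ₜ n) = map ((PM.act p q).flip m) ((PN.act p q).flip n) x := by
  induction x using TensorProduct.induction_on with
  | zero => simp
  | tmul a b => simp
  | add x y hx hy => simp [hx, hy]

lemma sum_pairAct_swapAntipode_pairAct {ι : Type*} (p q : Q) (h : H p) (ρ : Repr k h ι)
    (Y : M q ⊗[k] N q) :
    ∑ i ∈ ρ.index, pairAct PM PN (G.inv p) (G.mul p q) (A.swapAntipode p (comul (ρ.left i)))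
        (pairAct PM PN p q (comul (ρ.right i)) Y)
      = counit (R := k) h • gcl (k := k) (H := fun r => M r ⊗[k] N r)
          (G.inv_mul_cancel p q).symm Y := by
  induction Y using TensorProduct.induction_on with
  | zero => simp
  | add Y Z hY hZ => simp only [map_add, Finset.sum_add_distrib, smul_add, hY, hZ]
  | tmul m n =>
    let β i := ℛ k (ρ.right i)
    let γ i l := ℛ k ((β i).left l)
    let Φ := TensorProduct.lift ((pairAct PM PN (G.inv p) (G.mul p q) ∘ₗ A.swapAntipode p).compl₂
      ((pairAct PM PN p q).flip (m ⊗ₜ n)))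
    have hΦ : ∑ i ∈ ρ.index, pairAct PM PN (G.inv p) (G.mul p q)
        (A.swapAntipode p (comul (ρ.left i))) (pairAct PM PN p q (comul (ρ.right i)) (m ⊗ₜ n))
        = Φ (map comul comul (comul h)) := by
      simp [Φ, ← ρ.eq]
    rw [hΦ, map_comul_comul_comul_eq_sum ρ β γ]
    simp only [Φ, map_sum, lift.tmul, LinearMap.compl₂_apply, LinearMap.comp_apply,
      LinearMap.flip_apply, GradedHopfQuasigroup.swapAntipode_tmul, pairAct_tmul_tmul]
    calc _ = ∑ i ∈ ρ.index, ∑ l ∈ (β i).index, counit (R := k) ((β i).left l) •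
              (gcl (k := k) (G.inv_mul_cancel p q).symm m ⊗ₜ[k]
                PN.act (G.inv p) (G.mul p q) (A.antipode p (ρ.left i))
                  (PN.act p q ((β i).right l) n)) := by
          refine Finset.sum_congr rfl fun i _ => Finset.sum_congr rfl fun l _ => ?_
          rw [← sum_tmul, PM.sum_antipode_act_act, smul_tmul']
      _ = ∑ i ∈ ρ.index, gcl (k := k) (G.inv_mul_cancel p q).symm m ⊗ₜ[k]
                PN.act (G.inv p) (G.mul p q) (A.antipode p (ρ.left i))
                  (PN.act p q (ρ.right i) n) := by
          refine Finset.sum_congr rfl fun i _ => ?_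
          conv_rhs => rw [← sum_counit_smul (β i)]
          simp only [map_sum, map_smul, LinearMap.sum_apply, LinearMap.smul_apply, tmul_sum,
            tmul_smul]
      _ = _ := by rw [← tmul_sum, PN.sum_antipode_act_act, tmul_smul, gcl_tmul]

lemma sum_pairAct_pairAct_swapAntipode {ι : Type*} (p q : Q) (h : H p) (ρ : Repr k h ι)
    (Y : M q ⊗[k] N q) :
    ∑ i ∈ ρ.index, pairAct PM PN p (G.mul (G.inv p) q) (comul (ρ.left i))
        (pairAct PM PN (G.inv p) q (A.swapAntipode p (comul (ρ.right i))) Y)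
      = counit (R := k) h • gcl (k := k) (H := fun r => M r ⊗[k] N r)
          (G.mul_inv_cancel_left p q).symm Y := by
  induction Y using TensorProduct.induction_on with
  | zero => simp
  | add Y Z hY hZ => simp only [map_add, Finset.sum_add_distrib, smul_add, hY, hZ]
  | tmul m n =>
    let β i := ℛ k (ρ.right i)
    let γ i l := ℛ k ((β i).left l)
    let Φ := TensorProduct.lift ((pairAct PM PN p (G.mul (G.inv p) q)).compl₂
      ((pairAct PM PN (G.inv p) q).flip (m ⊗ₜ n) ∘ₗ A.swapAntipode p))
    have hΦ : ∑ i ∈ ρ.index, pairAct PM PN p (G.mul (G.inv p) q) (comul (ρ.left i))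
        (pairAct PM PN (G.inv p) q (A.swapAntipode p (comul (ρ.right i))) (m ⊗ₜ n))
        = Φ (map comul comul (comul h)) := by
      simp [Φ, ← ρ.eq]
    rw [hΦ, map_comul_comul_comul_eq_sum ρ β γ]
    simp only [Φ, map_sum, lift.tmul, LinearMap.compl₂_apply, LinearMap.comp_apply,
      LinearMap.flip_apply, GradedHopfQuasigroup.swapAntipode_tmul, pairAct_tmul_tmul]
    calc _ = ∑ i ∈ ρ.index, ∑ l ∈ (β i).index, counit (R := k) ((β i).left l) •
              (PM.act p (G.mul (G.inv p) q) (ρ.left i)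
                  (PM.act (G.inv p) q (A.antipode p ((β i).right l)) m) ⊗ₜ[k]
                gcl (k := k) (G.mul_inv_cancel_left p q).symm n) := by
          refine Finset.sum_congr rfl fun i _ => Finset.sum_congr rfl fun l _ => ?_
          rw [← tmul_sum, PN.sum_act_antipode_act, tmul_smul]
      _ = ∑ i ∈ ρ.index, PM.act p (G.mul (G.inv p) q) (ρ.left i)
                  (PM.act (G.inv p) q (A.antipode p (ρ.right i)) m) ⊗ₜ[k]
                gcl (k := k) (G.mul_inv_cancel_left p q).symm n := by
          refine Finset.sum_congr rfl fun i _ => ?_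
          conv_rhs => rw [← sum_counit_smul (β i)]
          simp only [map_sum, map_smul, LinearMap.sum_apply, LinearMap.smul_apply, sum_tmul,
            smul_tmul']
      _ = _ := by rw [← sum_tmul, PM.sum_act_antipode_act, ← smul_tmul', gcl_tmul]

end GradedQuasimodule

namespace GradedHopfQuasigroup

variable (A : GradedHopfQuasigroup k G H)

lemma pairAct_regular_comul_comul (p q : Q) (x : H p) (y : H q) :
    A.regular.pairAct A.regular p q (comul x) (comul y) = comul (A.mul p q x y) := by
  rw [A.comul_mul]
  generalize comul (R := k) x = u
  generalize comul (R := k) y = v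
  induction u using TensorProduct.induction_on with
  | zero => simp
  | add u u' hu hu' => simp [hu, hu', add_tmul]
  | tmul a b =>
    induction v using TensorProduct.induction_on with
    | zero => simp
    | add v v' hv hv' => simp [hv, hv', tmul_add]
    | tmul c d => simp [regular, tensorTensorTensorComm_tmul]

lemma sum_pairAct_comul_comul_antipode {ι : Type*} (p : Q) (h : H p) (ρ : Repr k h ι) :
    ∑ i ∈ ρ.index, A.regular.pairAct A.regular p (G.inv p) (comul (ρ.left i))
        (comul (A.antipode p (ρ.right i)))
      = counit (R := k) h • (gcl (k := k) (G.mul_inv_self p).symm A.one ⊗ₜ[k]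
          gcl (k := k) (G.mul_inv_self p).symm A.one) := by
  simp only [pairAct_regular_comul_comul]
  rw [← map_sum, sum_mul_antipode, map_smul, comul_gcl (F := H), A.comul_one, map_tmul]

lemma pairAct_regular_apply_one_tmul_one (p : Q) (x : H (G.inv p) ⊗[k] H (G.inv p)) :
    A.regular.pairAct A.regular (G.inv p) (G.mul p (G.inv p)) x
        (gcl (k := k) (G.mul_inv_self p).symm A.one ⊗ₜ[k]
          gcl (k := k) (G.mul_inv_self p).symm A.one)
      = gcl (k := k) (H := fun r => H r ⊗[k] H r) (G.inv_mul_cancel p (G.inv p)).symm x := by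
  induction x using TensorProduct.induction_on with
  | zero => simp
  | add x y hx hy => simp [hx, hy]
  | tmul a b =>
    simp [regular, gcl_apply_right (k := k) G.mul A.mul, mul_one_eq_gcl, gcl_gcl, gcl_tmul]

theorem comul_antipode (p : Q) (h : H p) :
    comul (R := k) (A.antipode p h) = A.swapAntipode p (comul h) := by
  let ρ := ℛ k h
  let α i := ℛ k (ρ.left i)
  let β i := ℛ k (ρ.right i)
  let Φ := TensorProduct.lift
    ((A.regular.pairAct A.regular (G.inv p) (G.mul p (G.inv p)) ∘ₗ A.swapAntipode p ∘ₗ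
        comul).compl₂
      (TensorProduct.lift ((A.regular.pairAct A.regular p (G.inv p) ∘ₗ comul).compl₂
        (comul ∘ₗ A.antipode p))))
  have coassoc := congrArg Φ (sum_tmul_tmul_eq ρ α β)
  simp only [Φ, map_sum, lift.tmul, LinearMap.compl₂_apply, LinearMap.comp_apply] at coassoc
  apply gcl_injective (k := k) (F := fun r => H r ⊗[k] H r) (G.inv_mul_cancel p (G.inv p)).symm
  calc _ = ∑ i ∈ ρ.index, counit (R := k) (ρ.left i) •
          gcl (k := k) (H := fun r => H r ⊗[k] H r) (G.inv_mul_cancel p (G.inv p)).symm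
            (comul (A.antipode p (ρ.right i))) := by
        conv_lhs => rw [← sum_counit_smul ρ]
        simp only [map_sum, map_smul]
    _ = ∑ i ∈ ρ.index, ∑ j ∈ (α i).index,
          A.regular.pairAct A.regular (G.inv p) (G.mul p (G.inv p))
            (A.swapAntipode p (comul ((α i).left j)))
            (A.regular.pairAct A.regular p (G.inv p) (comul ((α i).right j))
              (comul (A.antipode p (ρ.right i)))) := by
        simp only [A.regular.sum_pairAct_swapAntipode_pairAct A.regular]
    _ = ∑ i ∈ ρ.index, counit (R := k) (ρ.right i) •
          A.regular.pairAct A.regular (G.inv p) (G.mul p (G.inv p))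
            (A.swapAntipode p (comul (ρ.left i)))
            (gcl (k := k) (G.mul_inv_self p).symm A.one ⊗ₜ[k]
              gcl (k := k) (G.mul_inv_self p).symm A.one) := by
        rw [coassoc]
        simp only [← map_sum, sum_pairAct_comul_comul_antipode, map_smul]
    _ = _ := by
        conv_rhs => rw [← sum_counit_right_smul ρ]
        simp only [map_sum, map_smul, pairAct_regular_apply_one_tmul_one]

end GradedHopfQuasigroup

namespace GradedQuasimodule

variable {A : GradedHopfQuasigroup k G H} {M N : Q → Type w}
  [∀ q, AddCommGroup (M q)] [∀ q, Module k (M q)]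
  [∀ q, AddCommGroup (N q)] [∀ q, Module k (N q)]
  (PM : GradedQuasimodule A M) (PN : GradedQuasimodule A N)

def diagAct (p q : Q) :
    H p →ₗ[k] M q ⊗[k] N q →ₗ[k] M (G.mul p q) ⊗[k] N (G.mul p q) :=
  pairAct PM PN p q ∘ₗ comul

lemma diagAct_one_act (q : Q) (Y : M q ⊗[k] N q) :
    gcl (k := k) (H := fun r => M r ⊗[k] N r) (G.one_mul q) (diagAct PM PN G.one q A.one Y)
      = Y := by
  induction Y using TensorProduct.induction_on with
  | zero => simp
  | add Y Z hY hZ => simp only [map_add, hY, hZ]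
  | tmul m n => simp [diagAct, A.comul_one, gcl_tmul, PM.one_act, PN.one_act]

lemma diagAct_quasi_left (p q : Q) (h : H p) (Y : M q ⊗[k] N q) :
    TensorProduct.lift ((diagAct PM PN p (G.mul (G.inv p) q)).compl₂
        (((diagAct PM PN (G.inv p) q).flip Y).comp (A.antipode p))) (comul h)
      = gcl (k := k) (H := fun r => M r ⊗[k] N r) (G.mul_inv_cancel_left p q).symm
          (counit (R := k) h • Y) := by
  simp only [lift_comul_eq_sum _ (ℛ k h), LinearMap.compl₂_apply, LinearMap.comp_apply,
    LinearMap.flip_apply, diagAct, A.comul_antipode, map_smul]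
  exact sum_pairAct_pairAct_swapAntipode PM PN p q h _ Y

lemma diagAct_quasi_left' (p q : Q) (h : H p) (Y : M q ⊗[k] N q) :
    TensorProduct.lift (((diagAct PM PN (G.inv p) (G.mul p q)).comp (A.antipode p)).compl₂
        ((diagAct PM PN p q).flip Y)) (comul h)
      = gcl (k := k) (H := fun r => M r ⊗[k] N r) (G.inv_mul_cancel p q).symm
          (counit (R := k) h • Y) := by
  simp only [lift_comul_eq_sum _ (ℛ k h), LinearMap.compl₂_apply, LinearMap.comp_apply,
    LinearMap.flip_apply, diagAct, A.comul_antipode, map_smul]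
  exact sum_pairAct_swapAntipode_pairAct PM PN p q h _ Y

def tensor : GradedQuasimodule A (fun q => M q ⊗[k] N q) where
  act := diagAct PM PN
  one_act := diagAct_one_act PM PN
  quasi_left := diagAct_quasi_left PM PN
  quasi_left' := diagAct_quasi_left' PM PN

end GradedQuasimodule

/-- The tensor product of two graded quasimodules with the diagonal action
is again a graded quasimodule. -/
theorem gradedQuasimodule_tensor (A : GradedHopfQuasigroup k G H)
    (M N : Q → Type w)
    [∀ q, AddCommGroup (M q)] [∀ q, Module k (M q)]
    [∀ q, AddCommGroup (N q)] [∀ q, Module k (N q)]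
    (PM : GradedQuasimodule A M) (PN : GradedQuasimodule A N) :
    ∃ P : GradedQuasimodule A (fun q => M q ⊗[k] N q),
      ∀ (p q : Q) (h : H p) (m : M q) (n : N q),
        (P.act p q h) (m ⊗ₜ[k] n)
          = TensorProduct.map ((PM.act p q).flip m) ((PN.act p q).flip n)
              (Coalgebra.comul (R := k) h) :=
  ⟨PM.tensor PN, fun p q h m n => PM.pairAct_apply_tmul PN p q (comul h) m n⟩
end

section
/- Let H be a Q-graded Hopf quasigroup and A an H-quasimodule Hopf quasigroup. Then the action commutes with the antipode of A: h·S(a) = S(h·a) for all p ∈ Q, h ∈ H_p, a ∈ A. -/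
open TensorProduct

universe u v w

variable {k : Type v} [Field k]

/-- A Hopf quasigroup: a unital, not necessarily associative algebra which is a
coassociative counital coalgebra with multiplicative comultiplication and counit,
together with an antipode satisfying the Hopf quasigroup identities. -/
structure HopfQuasigroupStr (k : Type v) [Field k] (A : Type w)
    [AddCommGroup A] [Module k A] [Coalgebra k A] where
  mul : A →ₗ[k] A →ₗ[k] A
  one : A
  antipode : A →ₗ[k] A
  mul_one' : ∀ a, mul a one = a
  one_mul' : ∀ a, mul one a = a
  comul_mul : ∀ a b, Coalgebra.comul (R := k) ((mul a) b)
    = (TensorProduct.map (TensorProduct.lift mul) (TensorProduct.lift mul))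
        ((TensorProduct.tensorTensorTensorComm k A A A A)
          (Coalgebra.comul a ⊗ₜ[k] Coalgebra.comul b))
  counit_mul : ∀ a b, Coalgebra.counit (R := k) ((mul a) b)
    = Coalgebra.counit (R := k) a * Coalgebra.counit (R := k) b
  comul_one : Coalgebra.comul (R := k) one = one ⊗ₜ[k] one
  counit_one : Coalgebra.counit (R := k) one = 1
  /-- `S(a₁)(a₂ b) = ε(a) b` -/
  antipode_ax1 : ∀ a b, TensorProduct.lift ((mul.comp antipode).compl₂ (mul.flip b))
    (Coalgebra.comul a) = Coalgebra.counit (R := k) a • b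
  /-- `a₁(S(a₂) b) = ε(a) b` -/
  antipode_ax2 : ∀ a b, TensorProduct.lift (mul.compl₂ ((mul.flip b).comp antipode))
    (Coalgebra.comul a) = Coalgebra.counit (R := k) a • b
  /-- `(b S(a₁)) a₂ = ε(a) b` -/
  antipode_ax3 : ∀ a b, TensorProduct.lift (mul.comp ((mul b).comp antipode))
    (Coalgebra.comul a) = Coalgebra.counit (R := k) a • b
  /-- `(b a₁) S(a₂) = ε(a) b` -/
  antipode_ax4 : ∀ a b, TensorProduct.lift ((mul.comp (mul b)).compl₂ antipode)
    (Coalgebra.comul a) = Coalgebra.counit (R := k) a • b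

variable {Q : Type u} {G : QuasigroupStruct Q}
  {H : Q → Type w} [∀ p, AddCommGroup (H p)] [∀ p, Module k (H p)]
  [∀ p, Coalgebra k (H p)]

/-- An `H`-quasimodule Hopf quasigroup: a Hopf quasigroup `A` which is an
`H`-quasimodule such that `A` is both an `H`-quasimodule algebra and an
`H`-quasimodule coalgebra. -/
structure QuasimoduleHopfQuasigroup (Hh : GradedHopfQuasigroup k G H)
    (A : Type w) [AddCommGroup A] [Module k A] [Coalgebra k A]
    extends HopfQuasigroupStr k A where
  act : ∀ p, H p →ₗ[k] A →ₗ[k] A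
  one_act : ∀ a : A, (act G.one Hh.one) a = a
  /-- `h₁ · (S_p(h₂) · a) = ε_p(h) a` -/
  quasi_left : ∀ (p : Q) (h : H p) (a : A),
    TensorProduct.lift ((act p).compl₂
        (((act (G.inv p)).flip a).comp (Hh.antipode p))) (Coalgebra.comul h)
      = Coalgebra.counit (R := k) h • a
  /-- `S_p(h₁) · (h₂ · a) = ε_p(h) a` -/
  quasi_left' : ∀ (p : Q) (h : H p) (a : A),
    TensorProduct.lift (((act (G.inv p)).comp (Hh.antipode p)).compl₂
        ((act p).flip a)) (Coalgebra.comul h)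
      = Coalgebra.counit (R := k) h • a
  /-- `h · (ab) = (h₁·a)(h₂·b)` -/
  act_mul : ∀ (p : Q) (h : H p) (a b : A),
    (act p h) ((mul a) b)
      = TensorProduct.lift (mul.compl₁₂ ((act p).flip a) ((act p).flip b))
          (Coalgebra.comul h)
  act_one : ∀ (p : Q) (h : H p), (act p h) one = Coalgebra.counit (R := k) h • one
  comul_act : ∀ (p : Q) (h : H p) (a : A),
    Coalgebra.comul (R := k) ((act p h) a)
      = (TensorProduct.map (TensorProduct.lift (act p)) (TensorProduct.lift (act p)))
          ((TensorProduct.tensorTensorTensorComm k (H p) (H p) A A)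
            (Coalgebra.comul h ⊗ₜ[k] Coalgebra.comul a))
  counit_act : ∀ (p : Q) (h : H p) (a : A),
    Coalgebra.counit (R := k) ((act p h) a)
      = Coalgebra.counit (R := k) h * Coalgebra.counit (R := k) a

/-! The action is a coalgebra map `φ : H_p ⊗ A → A`, and `f : h ⊗ a ↦ h · S(a)` is a right
convolution inverse of it: `(h₁ · a₁)(h₂ · S(a₂)) = h · (a₁ S(a₂)) = ε(h) ε(a) 1`.
In a Hopf quasigroup such an inverse must be `S ∘ φ`, because the axiom
`S(x₁)(x₂ y) = ε(x) y` stands in for the missing associativity: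
`f(c) = ε(φ c₁) f(c₂) = S(φ c₁)(φ c₂ · f(c₃)) = S(φ c₁) ε(c₂) = S(φ c)`. -/

namespace HopfQuasigroupStr

variable {A : Type w} [AddCommGroup A] [Module k A] [Coalgebra k A] (S : HopfQuasigroupStr k A)

open Coalgebra

lemma sum_antipode_mul_mul {ι : Type*} {a : A} (r : Coalgebra.Repr k a ι) (b : A) :
    ∑ i ∈ r.index, S.mul (S.antipode (r.left i)) (S.mul (r.right i) b)
      = counit (R := k) a • b := by
  simpa [← r.eq, map_sum] using S.antipode_ax1 a b

lemma sum_mul_antipode {ι : Type*} {a : A} (r : Coalgebra.Repr k a ι) :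
    ∑ i ∈ r.index, S.mul (r.left i) (S.antipode (r.right i)) = counit (R := k) a • S.one := by
  simpa [← r.eq, map_sum, S.one_mul'] using S.antipode_ax4 a S.one

theorem eq_antipode_comp_of_mul_eq_counit {C : Type*} [AddCommMonoid C] [Module k C]
    [Coalgebra k C] (φ : C →ₗc[k] A) (f : C →ₗ[k] A)
    (hf : ∀ c, TensorProduct.lift (S.mul.compl₁₂ φ f) (comul c) = counit (R := k) c • S.one) :
    f = S.antipode ∘ₗ φ := by
  ext c
  let r := ℛ k c
  let r₁ := fun i => ℛ k (r.left i)
  let r₂ := fun i => ℛ k (r.right i)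
  calc f c = ∑ i ∈ r.index, counit (R := k) (φ (r.left i)) • f (r.right i) := by
        simp only [CoalgHomClass.counit_comp_apply, ← map_smul, ← map_sum, sum_counit_smul]
    _ = ∑ i ∈ r.index, ∑ j ∈ (r₁ i).index,
          S.mul (S.antipode (φ ((r₁ i).left j))) (S.mul (φ ((r₁ i).right j)) (f (r.right i))) :=
        Finset.sum_congr rfl fun i _ =>
          (S.sum_antipode_mul_mul ((r₁ i).induced φ) (f (r.right i))).symm
    _ = ∑ i ∈ r.index, ∑ j ∈ (r₂ i).index,
          S.mul (S.antipode (φ (r.left i))) (S.mul (φ ((r₂ i).left j)) (f ((r₂ i).right j))) := by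
        have coassoc := congrArg (TensorProduct.lift (S.mul.compl₂ (TensorProduct.lift S.mul)))
          (sum_map_tmul_tmul_eq (S.antipode ∘ₗ (φ : C →ₗ[k] A)) φ f c (a₁ := r₁) (a₂ := r₂))
        simp only [map_sum, TensorProduct.lift.tmul, LinearMap.compl₂_apply,
          LinearMap.comp_apply, LinearMap.coe_coe] at coassoc
        exact coassoc.symm
    _ = ∑ i ∈ r.index,
          S.mul (S.antipode (φ (r.left i))) (counit (R := k) (r.right i) • S.one) := by
        refine Finset.sum_congr rfl fun i _ => ?_
        rw [← hf, ← (r₂ i).eq, map_sum, map_sum]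
        simp
    _ = S.antipode (φ c) := by
        have counit_right : ∑ i ∈ r.index, counit (R := k) (r.right i) • r.left i = c := by
          simpa only [map_sum, TensorProduct.rid_tmul, one_smul]
            using congrArg (TensorProduct.rid k C) (sum_tmul_counit_eq r)
        simpa [S.mul_one'] using congrArg (S.antipode ∘ₗ φ) counit_right

end HopfQuasigroupStr

namespace QuasimoduleHopfQuasigroup

variable {Hh : GradedHopfQuasigroup k G H} {A : Type w} [AddCommGroup A] [Module k A]
  [Coalgebra k A] (P : QuasimoduleHopfQuasigroup Hh A)

open Coalgebra TensorProduct

noncomputable def actCoalgHom (p : Q) : H p ⊗[k] A →ₗc[k] A where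
  toLinearMap := lift (P.act p)
  counit_comp := by
    ext h a
    simp [P.counit_act, mul_comm]
  map_comp_comul := by
    ext h a
    simp [P.comul_act, AlgebraTensorModule.tensorTensorTensorComm_eq]

lemma act_mul_eq_sum {ι : Type*} {p : Q} {h : H p} (r : Coalgebra.Repr k h ι) (a b : A) :
    P.act p h (P.mul a b)
      = ∑ i ∈ r.index, P.mul (P.act p (r.left i) a) (P.act p (r.right i) b) := by
  simp [P.act_mul, ← r.eq, map_sum]

lemma act_mul_act_antipode_eq_counit (p : Q) (c : H p ⊗[k] A) :
    lift (P.mul.compl₁₂ (P.actCoalgHom p) (lift ((P.act p).compl₂ P.antipode))) (comul c)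
      = counit (R := k) c • P.one := by
  induction c using TensorProduct.induction_on with
  | zero => simp
  | add x y hx hy => simp only [map_add, hx, hy, add_smul]
  | tmul h a =>
    let rh := ℛ k h
    let ra := ℛ k a
    calc _ = ∑ j ∈ ra.index, P.act p h (P.mul (ra.left j) (P.antipode (ra.right j))) := by
          simp only [P.act_mul_eq_sum rh]
          rw [comul_tmul, ← rh.eq, ← ra.eq]
          simp [actCoalgHom, map_sum, sum_tmul, tmul_sum]
      _ = counit (R := k) (h ⊗ₜ[k] a) • P.one := by
          rw [← map_sum, P.sum_mul_antipode ra, map_smul, P.act_one, smul_smul, counit_tmul,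
            smul_eq_mul]

end QuasimoduleHopfQuasigroup

/-- The action commutes with the antipode of `A`: `h · S(a) = S(h · a)`. -/
theorem quasimoduleHopfQuasigroup_act_antipode {Hh : GradedHopfQuasigroup k G H}
    {A : Type w} [AddCommGroup A] [Module k A] [Coalgebra k A]
    (P : QuasimoduleHopfQuasigroup Hh A) (p : Q) (h : H p) (a : A) :
    (P.act p h) (P.antipode a) = P.antipode ((P.act p h) a) :=
  congrArg (· (h ⊗ₜ[k] a)) (P.eq_antipode_comp_of_mul_eq_counit (P.actCoalgHom p)
    (TensorProduct.lift ((P.act p).compl₂ P.antipode)) (P.act_mul_act_antipode_eq_counit p))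
end
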